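/- Let A be a perfect relevant algebra and θ(a) = {j ∈ J∞(A) : j ≤ a}. For all a, b ∈ A and all j ∈ J∞(A): j ≤ a → b if and only if for all i, k ∈ J∞(A), if k ≤ j ∘ i and i ≤ a then k ≤ b. Consequently θ(a → b) = θ(a) →꜀ θ(b), where Y →꜀ Z = {x ∈ J∞(A) : for all y, z ∈ J∞(A), z ≤ x ∘ y and y ∈ Y imply z ∈ Z}. -/
import Mathlib


/-- Completely join-irreducible element of a complete lattice:
whenever `a = ⋁ S`, then `a = s` for some `s ∈ S`. -/
def CompletelyJoinIrreducible {A : Type*} [CompleteLattice A] (a : A) : Prop :=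
  ∀ S : Set A, a = sSup S → ∃ s ∈ S, a = s

/-- Completely meet-irreducible element of a complete lattice:
whenever `a = ⋀ S`, then `a = s` for some `s ∈ S`. -/
def CompletelyMeetIrreducible {A : Type*} [CompleteLattice A] (a : A) : Prop :=
  ∀ S : Set A, a = sInf S → ∃ s ∈ S, a = s

/-- A perfect relevant algebra: a complete, completely distributive lattice
which is join-generated by its completely join-irreducible elements and
meet-generated by its completely meet-irreducible elements, equipped with
fusion `fus`, relevant implication `rimp`, relevant negation `rneg` and the
relevant truth constant `rt`, satisfying the relevant algebra axioms together
with the complete (anti)additivity laws. -/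
class PerfectRelevantAlgebra (A : Type*) extends CompletelyDistribLattice A where
  fus : A → A → A
  rimp : A → A → A
  rneg : A → A
  rt : A
  fus_sup_left : ∀ a b c : A, fus a (b ⊔ c) = fus a b ⊔ fus a c
  fus_sup_right : ∀ a b c : A, fus (b ⊔ c) a = fus b a ⊔ fus c a
  rneg_sup : ∀ a b : A, rneg (a ⊔ b) = rneg a ⊓ rneg b
  rneg_inf : ∀ a b : A, rneg (a ⊓ b) = rneg a ⊔ rneg b
  rneg_top : rneg ⊤ = ⊥
  rneg_bot : rneg ⊥ = ⊤
  fus_bot : ∀ a : A, fus a ⊥ = ⊥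
  bot_fus : ∀ a : A, fus ⊥ a = ⊥
  rt_fus : ∀ a : A, fus rt a = a
  fus_le_iff : ∀ a b c : A, fus a b ≤ c ↔ a ≤ rimp b c
  fus_sSup_left : ∀ (S : Set A) (a : A), fus (sSup S) a = ⨆ s ∈ S, fus s a
  fus_sSup_right : ∀ (S : Set A) (a : A), fus a (sSup S) = ⨆ s ∈ S, fus a s
  rimp_sSup_left : ∀ (S : Set A) (a : A), rimp (sSup S) a = ⨅ s ∈ S, rimp s a
  rimp_sInf_right : ∀ (S : Set A) (a : A), rimp a (sInf S) = ⨅ s ∈ S, rimp a s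
  rneg_sSup : ∀ S : Set A, rneg (sSup S) = ⨅ s ∈ S, rneg s
  rneg_sInf : ∀ S : Set A, rneg (sInf S) = ⨆ s ∈ S, rneg s
  join_generated : ∀ a : A, a = sSup {j : A | CompletelyJoinIrreducible j ∧ j ≤ a}
  meet_generated : ∀ a : A, a = sInf {m : A | CompletelyMeetIrreducible m ∧ a ≤ m}

namespace PerfectRelevantAlgebra

variable {A : Type*} [PerfectRelevantAlgebra A]

/-- The right adjoint `∼♯` of relevant negation: `∼♯ a = ⋁{b : a ≤ ∼b}`. -/
def rnegSharp (a : A) : A := sSup {b : A | a ≤ rneg b}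

/-- The left adjoint `∼♭` of relevant negation: `∼♭ b = ⋀{a : ∼a ≤ b}`. -/
def rnegFlat (b : A) : A := sInf {a : A | rneg a ≤ b}

/-- `λ(m) = ⋀{u : u ≰ m}`. -/
def lam (m : A) : A := sInf {u : A | ¬ u ≤ m}

end PerfectRelevantAlgebra

namespace PerfectRelevantAlgebra

variable {A : Type*} [PerfectRelevantAlgebra A]

/-- The map `θ(a) = {j ∈ J∞(A) : j ≤ a}`. -/
def theta (a : A) : Set A := {j : A | CompletelyJoinIrreducible j ∧ j ≤ a}

/-- Complex implication on subsets of `J∞(A)`: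
`Y →꜀ Z = {x ∈ J∞(A) : ∀ y z ∈ J∞(A), z ≤ x ∘ y and y ∈ Y imply z ∈ Z}`. -/
def primeCimp (Y Z : Set A) : Set A :=
  {x : A | CompletelyJoinIrreducible x ∧
    ∀ y z : A, CompletelyJoinIrreducible y → CompletelyJoinIrreducible z →
      z ≤ fus x y → y ∈ Y → z ∈ Z}

end PerfectRelevantAlgebra

open PerfectRelevantAlgebra in
/-- in a perfect relevant algebra, for completely
join-irreducible `j`: `j ≤ a → b` iff for all completely join-irreducible
`i, k`, `k ≤ j ∘ i` and `i ≤ a` imply `k ≤ b`; consequently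
`θ(a → b) = θ(a) →꜀ θ(b)`. -/
theorem theta_rimp {A : Type*} [PerfectRelevantAlgebra A] (a b : A) :
    (∀ j : A, CompletelyJoinIrreducible j →
      (j ≤ rimp a b ↔
        ∀ i k : A, CompletelyJoinIrreducible i → CompletelyJoinIrreducible k →
          k ≤ fus j i → i ≤ a → k ≤ b)) ∧
    theta (rimp a b) = primeCimp (theta a) (theta b) := by
  have key : ∀ j : A, (j ≤ rimp a b ↔
      ∀ i k : A, CompletelyJoinIrreducible i → CompletelyJoinIrreducible k →
        k ≤ fus j i → i ≤ a → k ≤ b) := by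
    intro j
    constructor
    · intro h i k _ _ hk hia
      have hj : fus j a ≤ b := (fus_le_iff j a b).mpr h
      have hmono : fus j i ≤ fus j a := by
        have : fus j (i ⊔ a) = fus j i ⊔ fus j a := fus_sup_left j i a
        rw [sup_eq_right.mpr hia] at this
        exact le_sup_left.trans this.ge
      exact hk.trans (hmono.trans hj)
    · intro h
      rw [← fus_le_iff]
      calc fus j a = fus j (sSup {i : A | CompletelyJoinIrreducible i ∧ i ≤ a}) := by
            rw [← join_generated a]
        _ = ⨆ i ∈ {i : A | CompletelyJoinIrreducible i ∧ i ≤ a}, fus j i :=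
            fus_sSup_right _ _
        _ ≤ b := by
            refine iSup₂_le fun i hi => ?_
            calc fus j i
                = sSup {k : A | CompletelyJoinIrreducible k ∧ k ≤ fus j i} :=
                  join_generated _
              _ ≤ b := sSup_le fun k hk => h i k hi.1 hk.1 hk.2 hi.2
  refine ⟨fun j hj => key j, ?_⟩
  ext j
  simp only [theta, primeCimp, Set.mem_setOf_eq]
  constructor
  · rintro ⟨hj, hle⟩
    exact ⟨hj, fun y z hy hz hzf ⟨_, hya⟩ => ⟨hz, (key j).mp hle y z hy hz hzf hya⟩⟩
  · rintro ⟨hj, h⟩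
    exact ⟨hj, (key j).mpr fun i k hi hk hkf hia => (h i k hi hk hkf ⟨hi, hia⟩).2⟩
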